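/- arXiv:2105.04704 — 6 statements merged into one kernel-verified Lean document; each statement's English description precedes it below -/
import Mathlib

section
/- There exists an optimal interpreter: a partial computable function U : List Bool × ℕ →. ℕ such that for every partial computable function A : List Bool × ℕ →. ℕ there is a constant c ∈ ℕ with C_U(x|y) ≤ C_A(x|y) + c for all x, y ∈ ℕ (the inequality being trivially satisfied when C_A(x|y) = ∞). -/
open scoped ENat
open Nat.Partrec (Code)
open Nat.Partrec.Code

/-- split a list of bools into (number of leading `true`s, remainder after first `false`). -/
def bsplit : List Bool → ℕ × List Bool
  | [] => (0, [])
  | b :: l => bif b then ((bsplit l).1 + 1, (bsplit l).2) else (0, l)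

lemma bsplit_eq (n : ℕ) (q : List Bool) :
    bsplit (List.replicate n true ++ false :: q) = (n, q) := by
  induction n with
  | zero => simp [bsplit]
  | succ n ih => simp [List.replicate_succ, bsplit, ih]

lemma bsplit_primrec : Primrec bsplit := by
  have : Primrec fun l : List Bool =>
      List.rec (motive := fun _ => ℕ × List Bool) ((0, []) : ℕ × List Bool)
        (fun b l ih => bif b then (ih.1 + 1, ih.2) else (0, l)) l := by
    have h : Primrec (fun x : List Bool × (Bool × List Bool × (ℕ × List Bool)) =>
        bif x.2.1 then (x.2.2.2.1 + 1, x.2.2.2.2) else (0, x.2.2.1)) :=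
      Primrec.cond (Primrec.fst.comp Primrec.snd)
        (Primrec.pair
          (Primrec.succ.comp <| Primrec.fst.comp <| Primrec.snd.comp <|
            Primrec.snd.comp Primrec.snd)
          (Primrec.snd.comp <| Primrec.snd.comp <| Primrec.snd.comp Primrec.snd))
        (Primrec.pair (Primrec.const 0)
          (Primrec.fst.comp <| Primrec.snd.comp Primrec.snd))
    exact Primrec.list_rec (Primrec.id (α := List Bool))
      (Primrec.const ((0, []) : ℕ × List Bool)) h.to₂
  convert this using 2 with l
  induction l with
  | nil => rfl
  | cons b l ih => simp [bsplit, ih]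

/-- Conditional Kolmogorov complexity of `x` given `y` with respect to the
interpreter `A` : the least length of a binary string `p` with `A (p, y) = x`,
and `⊤` (infinity) if no such `p` exists. -/
noncomputable def CC (A : List Bool × ℕ →. ℕ) (x y : ℕ) : ℕ∞ :=
  sInf {n : ℕ∞ | ∃ p : List Bool, x ∈ A (p, y) ∧ (p.length : ℕ∞) = n}

/-- There exists an optimal interpreter: a partial computable
`U : List Bool × ℕ →. ℕ` such that for every partial computable
`A : List Bool × ℕ →. ℕ` there is a constant `c` with
`C_U(x|y) ≤ C_A(x|y) + c` for all `x, y`. -/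
theorem exists_optimal_interpreter :
    ∃ U : List Bool × ℕ →. ℕ, Partrec U ∧
      ∀ A : List Bool × ℕ →. ℕ, Partrec A →
        ∃ c : ℕ, ∀ x y : ℕ, CC U x y ≤ CC A x y + (c : ℕ∞) := by
  classical
  refine ⟨fun a => eval (Denumerable.ofNat Code (bsplit a.1).1)
      (Nat.pair (Encodable.encode (bsplit a.1).2) a.2), ?_, ?_⟩
  · refine eval_part.comp ?_ ?_
    · exact (Computable.ofNat Code).comp
        (Primrec.fst.comp (bsplit_primrec.comp Primrec.fst)).to_comp
    · exact (Primrec₂.natPair.comp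
        (Primrec.encode.comp (Primrec.snd.comp (bsplit_primrec.comp Primrec.fst)))
        Primrec.snd).to_comp
  · intro A hA
    obtain ⟨cA, hcA⟩ := exists_code.1 hA
    refine ⟨Encodable.encode cA + 1, fun x y => ?_⟩
    by_cases hS : {n : ℕ∞ | ∃ p : List Bool, x ∈ A (p, y) ∧ (p.length : ℕ∞) = n}.Nonempty
    · obtain ⟨p, hp, hlen⟩ := csInf_mem hS
      set p' : List Bool := List.replicate (Encodable.encode cA) true ++ false :: p with hp'
      have hU : x ∈ eval (Denumerable.ofNat Code (bsplit p').1)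
          (Nat.pair (Encodable.encode (bsplit p').2) y) := by
        rw [hp', bsplit_eq]
        simp only [Denumerable.ofNat_encode, hcA]
        have hdec : Encodable.decode (α := List Bool × ℕ)
            (Nat.pair (Encodable.encode p) y) = some (p, y) := by
          have : Nat.pair (Encodable.encode p) y = Encodable.encode (p, y) := rfl
          rw [this, Encodable.encodek]
        rw [hdec, Part.coe_some, Part.bind_some]
        exact (Part.mem_map_iff _).2 ⟨x, hp, rfl⟩
      have hmem : (p'.length : ℕ∞) ∈
          {n : ℕ∞ | ∃ q : List Bool, x ∈ eval (Denumerable.ofNat Code (bsplit q).1)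
            (Nat.pair (Encodable.encode (bsplit q).2) y) ∧ (q.length : ℕ∞) = n} :=
        ⟨p', hU, rfl⟩
      calc CC _ x y ≤ (p'.length : ℕ∞) := sInf_le hmem
        _ = CC A x y + (Encodable.encode cA + 1 : ℕ) := by
            rw [CC, ← hlen]
            simp [hp']
            ring
    · rw [Set.not_nonempty_iff_eq_empty] at hS
      have : CC A x y = ⊤ := by rw [CC, hS, sInf_empty]
      simp [this]
end

section
/- Let U be an optimal interpreter. There is a constant c such that for all x, y ∈ ℕ: C_U(⟨x,y⟩) ≤ C_U(x) + 2·log₂(C_U(x) + 1) + C_U(y|x) + c, where ⟨x,y⟩ = Nat.pair x y. (Here C_U(x) is finite for every x, since U is optimal.) -/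
open scoped ENat

/-- `U` is an optimal interpreter. -/
def IsOptimal (U : List Bool × ℕ →. ℕ) : Prop :=
  Partrec U ∧ ∀ A : List Bool × ℕ →. ℕ, Partrec A →
    ∃ c : ℕ, ∀ x y : ℕ, CC U x y ≤ CC A x y + (c : ℕ∞)

namespace AdditionAux

/-- Decode a little-endian list of bits into a natural number. -/
def decodeBits (l : List Bool) : ℕ := l.foldr (fun b n => 2 * n + cond b 1 0) 0

lemma decodeBits_cons (b : Bool) (l : List Bool) :
    decodeBits (b :: l) = 2 * decodeBits l + cond b 1 0 := rfl

lemma decodeBits_bits (n : ℕ) : decodeBits n.bits = n := by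
  induction n using Nat.binaryRec with
  | zero => simp [decodeBits]
  | bit b n ih =>
    by_cases h : n = 0 ∧ b = false
    · simp [h.1, h.2, decodeBits]
    · rw [Nat.bits_append_bit n b (fun hn => by cases b <;> simp_all), decodeBits_cons, ih]
      cases b <;> simp [Nat.bit] <;> omega

/-- Self-delimiting encoding of a natural number. -/
def enc (n : ℕ) : List Bool := List.replicate n.bits.length true ++ false :: n.bits

lemma indexOf_replicate (k : ℕ) (t : List Bool) :
    List.idxOf false (List.replicate k true ++ false :: t) = k := by
  induction k with
  | zero => simp
  | succ k ih =>
    rw [List.replicate_succ, List.cons_append, List.idxOf_cons_ne _ (by simp), ih]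

/-- Split the input string into the two programs. -/
def splitStr (s : List Bool) : List Bool × List Bool :=
  (((s.drop (List.idxOf false s + 1)).drop (List.idxOf false s)).take
      (decodeBits ((s.drop (List.idxOf false s + 1)).take (List.idxOf false s))),
   ((s.drop (List.idxOf false s + 1)).drop (List.idxOf false s)).drop
      (decodeBits ((s.drop (List.idxOf false s + 1)).take (List.idxOf false s))))

lemma splitStr_enc (p q : List Bool) :
    splitStr (enc p.length ++ (p ++ q)) = (p, q) := by
  have hs : enc p.length ++ (p ++ q) =
      List.replicate p.length.bits.length true ++
        false :: (p.length.bits ++ (p ++ q)) := by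
    simp [enc]
  have hs' : enc p.length ++ (p ++ q) =
      (List.replicate p.length.bits.length true ++ [false]) ++
        (p.length.bits ++ (p ++ q)) := by
    simp [enc]
  have hk : List.idxOf false (enc p.length ++ (p ++ q)) = p.length.bits.length := by
    rw [hs]; exact indexOf_replicate _ _
  unfold splitStr
  rw [hk, hs', List.drop_left' (by simp), List.take_left' rfl, decodeBits_bits,
    List.drop_left' rfl, List.take_left' rfl, List.drop_left' rfl]

lemma take_eq (n : ℕ) (l : List Bool) :
    l.take n = (List.range (min n l.length)).map l.getI := by
  apply List.ext_getElem
  · simp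
  · intro i h1 h2
    simp only [List.getElem_map, List.getElem_range, List.getElem_take]
    rw [List.getI_eq_getElem]

lemma drop_eq (n : ℕ) (l : List Bool) :
    l.drop n = (List.range (l.length - n)).map (fun i => l.getI (n + i)) := by
  apply List.ext_getElem
  · simp
  · intro i h1 h2
    simp only [List.getElem_map, List.getElem_range, List.getElem_drop]
    rw [List.getI_eq_getElem]

lemma primrec_take : Primrec₂ (fun (n : ℕ) (l : List Bool) => l.take n) := by
  have : Primrec₂ (fun (n : ℕ) (l : List Bool) =>
      (List.range (min n l.length)).map l.getI) :=
    (Primrec.list_map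
      (Primrec.list_range.comp (Primrec.nat_min.comp Primrec.fst
        (Primrec.list_length.comp Primrec.snd)))
      ((Primrec.list_getI.comp (Primrec.snd.comp Primrec.fst) Primrec.snd).to₂)).to₂
  exact this.of_eq fun n l => (take_eq n l).symm

lemma primrec_drop : Primrec₂ (fun (n : ℕ) (l : List Bool) => l.drop n) := by
  have : Primrec₂ (fun (n : ℕ) (l : List Bool) =>
      (List.range (l.length - n)).map (fun i => l.getI (n + i))) :=
    (Primrec.list_map
      (Primrec.list_range.comp (Primrec.nat_sub.comp
        (Primrec.list_length.comp Primrec.snd) Primrec.fst))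
      ((Primrec.list_getI.comp (Primrec.snd.comp Primrec.fst)
        (Primrec.nat_add.comp (Primrec.fst.comp Primrec.fst) Primrec.snd)).to₂)).to₂
  exact this.of_eq fun n l => (drop_eq n l).symm

lemma primrec_decodeBits : Primrec decodeBits := by
  have : Primrec (fun l : List Bool =>
      l.foldr (fun b n => 2 * n + cond b 1 0) 0) :=
    Primrec.list_foldr Primrec.id (Primrec.const 0)
      ((Primrec.nat_add.comp
        (Primrec.nat_mul.comp (Primrec.const 2) (Primrec.snd.comp Primrec.snd))
        (Primrec.cond (Primrec.fst.comp Primrec.snd) (Primrec.const 1)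
          (Primrec.const 0))).to₂)
  exact this

lemma primrec_splitStr : Primrec splitStr := by
  have hk : Primrec (fun s : List Bool => List.idxOf false s) :=
    Primrec.list_idxOf.comp (Primrec.const false) Primrec.id
  have hrest : Primrec (fun s : List Bool => s.drop (List.idxOf false s + 1)) :=
    primrec_drop.comp (Primrec.succ.comp hk) Primrec.id
  have ht : Primrec (fun s : List Bool =>
      (s.drop (List.idxOf false s + 1)).drop (List.idxOf false s)) :=
    primrec_drop.comp hk hrest
  have hm : Primrec (fun s : List Bool =>
      decodeBits ((s.drop (List.idxOf false s + 1)).take (List.idxOf false s))) :=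
    primrec_decodeBits.comp (primrec_take.comp hk hrest)
  exact (primrec_take.comp hm ht).pair (primrec_drop.comp hm ht)

/-- The combined interpreter. -/
def Acomb (U : List Bool × ℕ →. ℕ) : List Bool × ℕ →. ℕ := fun z =>
  (U ((splitStr z.1).1, 0)).bind fun x =>
    (U ((splitStr z.1).2, x)).map fun y => Nat.pair x y

lemma partrec_Acomb {U : List Bool × ℕ →. ℕ} (hU : Partrec U) :
    Partrec (Acomb U) := by
  have h1 : Partrec (fun z : List Bool × ℕ => U ((splitStr z.1).1, 0)) :=
    hU.comp (((Primrec.fst.comp (primrec_splitStr.comp Primrec.fst)).pair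
      (Primrec.const 0)).to_comp)
  have h2 : Partrec (fun p : (List Bool × ℕ) × ℕ =>
      (U ((splitStr p.1.1).2, p.2)).map fun y => Nat.pair p.2 y) := by
    have hg : Partrec (fun p : (List Bool × ℕ) × ℕ => U ((splitStr p.1.1).2, p.2)) :=
      hU.comp (((Primrec.snd.comp
        (primrec_splitStr.comp (Primrec.fst.comp Primrec.fst))).pair
        Primrec.snd).to_comp)
    exact hg.map ((Primrec₂.natPair.comp (Primrec.snd.comp Primrec.fst)
      Primrec.snd).to₂).to_comp
  exact h1.bind h2

lemma mem_Acomb {U : List Bool × ℕ →. ℕ} {p q : List Bool} {x y : ℕ}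
    (hx : x ∈ U (p, 0)) (hy : y ∈ U (q, x)) :
    Nat.pair x y ∈ Acomb U (enc p.length ++ (p ++ q), 0) := by
  simp only [Acomb, splitStr_enc, Part.mem_bind_iff, Part.mem_map_iff]
  exact ⟨x, hx, y, hy, rfl⟩

lemma CC_le_of_mem {A : List Bool × ℕ →. ℕ} {x y : ℕ} {p : List Bool}
    (h : x ∈ A (p, y)) : CC A x y ≤ (p.length : ℕ∞) :=
  sInf_le ⟨p, h, rfl⟩

lemma exists_min {A : List Bool × ℕ →. ℕ} {x y : ℕ} (h : CC A x y ≠ ⊤) :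
    ∃ p : List Bool, x ∈ A (p, y) ∧ (p.length : ℕ∞) = CC A x y := by
  have hne : {n : ℕ∞ | ∃ p : List Bool, x ∈ A (p, y) ∧ (p.length : ℕ∞) = n}.Nonempty := by
    by_contra hne
    rw [Set.not_nonempty_iff_eq_empty] at hne
    apply h
    unfold CC
    rw [hne]
    simp
  obtain ⟨p, hp, hl⟩ := csInf_mem hne
  exact ⟨p, hp, hl⟩

lemma enc_length_le (n : ℕ) :
    (enc n).length ≤ 2 * Nat.log 2 (n + 1) + 3 := by
  have h1 : n.bits.length = n.size := Nat.size_eq_bits_len n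
  have h2 : n.size ≤ Nat.log 2 (n + 1) + 1 := by
    rw [Nat.size_le]
    have := Nat.lt_pow_succ_log_self (by norm_num : 1 < 2) (n + 1)
    omega
  have h3 : (enc n).length = 2 * n.bits.length + 1 := by
    simp [enc]; omega
  omega

end AdditionAux

open AdditionAux in
/-- Addition theorem for plain complexity:
`C_U(⟨x,y⟩) ≤ C_U(x) + 2·log₂(C_U(x) + 1) + C_U(y|x) + c`. -/
theorem addition_theorem_plain
    (U : List Bool × ℕ →. ℕ) (hU : IsOptimal U) :
    ∃ c : ℕ, ∀ x y : ℕ,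
      CC U (Nat.pair x y) 0 ≤
        CC U x 0 + ((2 * Nat.log 2 ((CC U x 0).toNat + 1) : ℕ) : ℕ∞)
          + CC U y x + (c : ℕ∞) := by
  obtain ⟨hpU, hopt⟩ := hU
  obtain ⟨c1, hc1⟩ := hopt (Acomb U) (partrec_Acomb hpU)
  refine ⟨c1 + 3, fun x y => ?_⟩
  by_cases hx : CC U x 0 = ⊤
  · rw [hx, top_add, top_add, top_add]; exact le_top
  by_cases hy : CC U y x = ⊤
  · rw [hy, add_top, top_add]; exact le_top
  obtain ⟨p, hp, hpl⟩ := exists_min hx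
  obtain ⟨q, hq, hql⟩ := exists_min hy
  have hmem := mem_Acomb hp hq
  have h1 : CC U (Nat.pair x y) 0 ≤ CC (Acomb U) (Nat.pair x y) 0 + (c1 : ℕ∞) :=
    hc1 _ 0
  have h2 : CC (Acomb U) (Nat.pair x y) 0 ≤
      ((enc p.length ++ (p ++ q)).length : ℕ∞) := CC_le_of_mem hmem
  have hlen : (enc p.length ++ (p ++ q)).length + c1 ≤
      p.length + 2 * Nat.log 2 (p.length + 1) + q.length + (c1 + 3) := by
    have := enc_length_le p.length
    simp only [List.length_append]
    omega
  rw [← hpl, ← hql]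
  have htn : ((p.length : ℕ∞)).toNat = p.length := by simp
  rw [htn]
  calc CC U (Nat.pair x y) 0
      ≤ CC (Acomb U) (Nat.pair x y) 0 + (c1 : ℕ∞) := h1
    _ ≤ ((enc p.length ++ (p ++ q)).length : ℕ∞) + (c1 : ℕ∞) :=
        add_le_add_left h2 _
    _ = (((enc p.length ++ (p ++ q)).length + c1 : ℕ) : ℕ∞) := by push_cast; rfl
    _ ≤ ((p.length + 2 * Nat.log 2 (p.length + 1) + q.length + (c1 + 3) : ℕ) : ℕ∞) := by
        exact_mod_cast hlen
    _ = (p.length : ℕ∞) + ((2 * Nat.log 2 (p.length + 1) : ℕ) : ℕ∞)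
          + (q.length : ℕ∞) + ((c1 + 3 : ℕ) : ℕ∞) := by push_cast; ring
end

section
/- Let V be an optimal string interpreter and let pair : List Bool × List Bool → List Bool be any computable injective function. Then there is a constant c such that for every n ≥ 1 there exist binary strings x, y with |x| + |y| = n and C_V(x) + C_V(y) + log₂ n < C_V(pair(x,y)) + c. (Hence the additive term 2·log₂ C(x) in the addition theorem for plain complexity cannot be removed.) -/
open scoped ENat

/-- Conditional Kolmogorov complexity of a binary string `x` given `y` with
respect to the string interpreter `A`. -/
noncomputable def CS (A : List Bool × ℕ →. List Bool) (x : List Bool) (y : ℕ) : ℕ∞ :=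
  sInf {n : ℕ∞ | ∃ p : List Bool, x ∈ A (p, y) ∧ (p.length : ℕ∞) = n}

/-- `V` is an optimal string interpreter. -/
def IsOptimalS (V : List Bool × ℕ →. List Bool) : Prop :=
  Partrec V ∧ ∀ A : List Bool × ℕ →. List Bool, Partrec A →
    ∃ c : ℕ, ∀ (x : List Bool) (y : ℕ), CS V x y ≤ CS A x y + (c : ℕ∞)


/-- An injective encoding of binary strings into naturals with
`ebits p + 2 ≤ 2 ^ (p.length + 1)`. -/
def ebits : List Bool → ℕ
  | [] => 0
  | b :: t => 2 * ebits t + 1 + b.toNat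

lemma ebits_add_two_le (p : List Bool) : ebits p + 2 ≤ 2 ^ (p.length + 1) := by
  induction p with
  | nil => simp [ebits]
  | cons b t ih =>
    have hb : b.toNat ≤ 1 := Bool.toNat_le b
    have h2 : 2 ^ (t.length + 1 + 1) = 2 * 2 ^ (t.length + 1) := by ring
    simp only [ebits, List.length_cons]
    omega

lemma ebits_injective : ∀ p q : List Bool, ebits p = ebits q → p = q := by
  intro p
  induction p with
  | nil =>
    intro q h
    cases q with
    | nil => rfl
    | cons c s => exfalso; simp only [ebits] at h; omega
  | cons b t ih =>
    intro q h
    cases q with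
    | nil => exfalso; simp only [ebits] at h; omega
    | cons c s =>
      simp only [ebits] at h
      have hb : b.toNat ≤ 1 := Bool.toNat_le b
      have hc : c.toNat ≤ 1 := Bool.toNat_le c
      have h1 : b.toNat = c.toNat := by omega
      have h2 : ebits t = ebits s := by omega
      have hbc : b = c := by cases b <;> cases c <;> simp_all
      rw [hbc, ih s h2]


/-- The logarithmic term in the addition theorem cannot be removed: for any
computable injective pairing of binary strings there is a constant `c` such
that for every `n ≥ 1` there are strings `x, y` with `|x| + |y| = n` and
`C_V(x) + C_V(y) + log₂ n < C_V(pair(x,y)) + c`. -/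
theorem pairing_complexity_lower_bound
    (V : List Bool × ℕ →. List Bool) (hV : IsOptimalS V)
    (pair : List Bool × List Bool → List Bool)
    (hpair : Computable pair) (hinj : Function.Injective pair) :
    ∃ c : ℕ, ∀ n : ℕ, 1 ≤ n → ∃ x y : List Bool,
      x.length + y.length = n ∧
      CS V x 0 + CS V y 0 + ((Nat.log 2 n : ℕ) : ℕ∞) <
        CS V (pair (x, y)) 0 + (c : ℕ∞) := by
  obtain ⟨hVpart, hopt⟩ := hV
  obtain ⟨c0, hc0⟩ := hopt (fun pz => Part.some pz.1)
    (Computable.fst.partrec)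
  have hle : ∀ x : List Bool, CS V x 0 ≤ (x.length : ℕ∞) + (c0 : ℕ∞) := by
    intro x
    have h1 : CS (fun pz : List Bool × ℕ => Part.some pz.1) x 0 ≤ (x.length : ℕ∞) :=
      sInf_le ⟨x, Part.mem_some x, rfl⟩
    calc CS V x 0 ≤ _ + (c0 : ℕ∞) := hc0 x 0
      _ ≤ (x.length : ℕ∞) + (c0 : ℕ∞) := add_le_add_left h1 _
  refine ⟨2 * c0 + 1, ?_⟩
  intro n hn
  set k := n + Nat.log 2 n with hk
  have hk1 : 1 ≤ k := by omega
  have hcount : ∃ x y : List Bool, x.length + y.length = n ∧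
      (k : ℕ∞) ≤ CS V (pair (x, y)) 0 := by
    by_contra hcon
    push_neg at hcon
    have hex : ∀ x y : List Bool, x.length + y.length = n →
        ∃ p : List Bool, pair (x, y) ∈ V (p, 0) ∧ p.length < k := by
      intro x y hxy
      have h := hcon x y hxy
      rw [CS, sInf_lt_iff] at h
      obtain ⟨m, ⟨p, hp, hm⟩, hmk⟩ := h
      rw [← hm] at hmk
      exact ⟨p, hp, by exact_mod_cast hmk⟩
    choose P hP hPlen using hex
    -- lengths of take/drop
    have hlen : ∀ (v : List.Vector Bool n) (i : Fin (n + 1)),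
        (v.1.take i).length + (v.1.drop i).length = n := by
      intro v i
      have hi : (i : ℕ) ≤ n := Nat.lt_succ_iff.mp i.2
      simp [List.length_take, List.length_drop, v.2, Nat.min_eq_left hi]
      omega
    have hbound : ∀ p : List Bool, p.length < k → ebits p < 2 ^ k - 1 := by
      intro p hp
      have h1 := ebits_add_two_le p
      have h2 : 2 ^ (p.length + 1) ≤ 2 ^ k := Nat.pow_le_pow_right (by norm_num) (by omega)
      have h3 : 2 ≤ 2 ^ k := by
        calc 2 = 2 ^ 1 := rfl
        _ ≤ 2 ^ k := Nat.pow_le_pow_right (by norm_num) hk1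
      omega
    let F : List.Vector Bool n × Fin (n + 1) → Fin (2 ^ k - 1) :=
      fun vi => ⟨ebits (P (vi.1.1.take vi.2) (vi.1.1.drop vi.2) (hlen vi.1 vi.2)),
        hbound _ (hPlen _ _ _)⟩
    have hFinj : Function.Injective F := by
      rintro ⟨v, i⟩ ⟨w, j⟩ hEq
      have hE : ebits (P (v.1.take i) (v.1.drop i) (hlen v i)) =
          ebits (P (w.1.take j) (w.1.drop j) (hlen w j)) := congrArg Fin.val hEq
      have hPeq := ebits_injective _ _ hE
      have hout : pair (v.1.take i, v.1.drop i) = pair (w.1.take j, w.1.drop j) := by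
        have h1 := hP (v.1.take i) (v.1.drop i) (hlen v i)
        have h2 := hP (w.1.take j) (w.1.drop j) (hlen w j)
        rw [hPeq] at h1
        exact Part.mem_unique h1 h2
      have hxy := hinj hout
      have hx : v.1.take i = w.1.take j := (Prod.mk.injEq _ _ _ _).mp hxy |>.1
      have hy : v.1.drop i = w.1.drop j := (Prod.mk.injEq _ _ _ _).mp hxy |>.2
      have hv : v.1 = w.1 := by
        rw [← List.take_append_drop (i : ℕ) v.1, hx, hy, List.take_append_drop]
      have hi : (i : ℕ) ≤ n := Nat.lt_succ_iff.mp i.2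
      have hj : (j : ℕ) ≤ n := Nat.lt_succ_iff.mp j.2
      have hij : (i : ℕ) = (j : ℕ) := by
        have h1 : (v.1.take i).length = i := by simp [List.length_take, v.2, Nat.min_eq_left hi]
        have h2 : (w.1.take j).length = j := by simp [List.length_take, w.2, Nat.min_eq_left hj]
        rw [← h1, ← h2, hx]
      have hv' : v = w := Subtype.ext hv
      have hij' : i = j := Fin.ext hij
      rw [hv', hij']
    have hcard := Fintype.card_le_of_injective F hFinj
    have hcard1 : Fintype.card (List.Vector Bool n × Fin (n + 1)) = 2 ^ n * (n + 1) := by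
      simp [card_vector]
    have hcard2 : Fintype.card (Fin (2 ^ k - 1)) = 2 ^ k - 1 := Fintype.card_fin _
    rw [hcard1, hcard2] at hcard
    have h2k : 2 ^ k ≤ 2 ^ n * n := by
      rw [hk, pow_add]
      exact Nat.mul_le_mul_left _ (Nat.pow_log_le_self 2 (by omega))
    have hpos : 1 ≤ 2 ^ n := Nat.one_le_two_pow
    have hmul : 2 ^ n * (n + 1) = 2 ^ n * n + 2 ^ n := by ring
    omega
  obtain ⟨x, y, hxy, hCge⟩ := hcount
  refine ⟨x, y, hxy, ?_⟩
  have hx := hle x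
  have hy := hle y
  calc CS V x 0 + CS V y 0 + ((Nat.log 2 n : ℕ) : ℕ∞)
      ≤ ((x.length + c0 + (y.length + c0) + Nat.log 2 n : ℕ) : ℕ∞) := by
        push_cast
        exact add_le_add (add_le_add hx hy) le_rfl
    _ = ((k + 2 * c0 : ℕ) : ℕ∞) := Nat.cast_inj.mpr (by omega)
    _ < ((k + (2 * c0 + 1) : ℕ) : ℕ∞) := Nat.cast_lt.mpr (by omega)
    _ = (k : ℕ∞) + ((2 * c0 + 1 : ℕ) : ℕ∞) := by push_cast; ring
    _ ≤ CS V (pair (x, y)) 0 + ((2 * c0 + 1 : ℕ) : ℕ∞) := add_le_add_left hCge _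
end

section
/- Let U be an optimal interpreter and let E ⊆ ℕ × ℕ be a recursively enumerable set. Then there is a constant c such that for every a ∈ ℕ whose section E^a = {x : (a,x) ∈ E} is finite and nonempty, and every x ∈ E^a, we have C_U(x|a) ≤ log₂(card E^a) + c. -/
open scoped ENat

namespace KolmoAux

open Nat.Partrec (Code)
open Nat.Partrec.Code

/-! ### The decoding of a program as a natural number -/

def KVal (p : List Bool) : ℕ := p.foldr (fun b n => Nat.bit b n) 0

theorem KVal_nil : KVal [] = 0 := rfl

theorem KVal_cons (b : Bool) (l : List Bool) : KVal (b :: l) = Nat.bit b (KVal l) := rfl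

theorem KVal_bits (k : ℕ) : KVal (Nat.bits k) = k := by
  induction k using Nat.binaryRec' with
  | zero => simp [KVal]
  | bit b n h ih => rw [Nat.bits_append_bit n b h, KVal_cons, ih]

/-! ### The enumeration machinery -/

/-- `x` is seen in section `a` by stage `s`. -/
def app (c : Code) (a x s : ℕ) : Bool :=
  decide (x < s) && (evaln s c (Nat.pair a x)).isSome

/-- computed discovery stage (`= D` once `x` is discovered). -/
def dd (c : Code) (a x s : ℕ) : ℕ :=
  ((List.range (s + 1)).filter fun t => !app c a x t).length

def keyS (c : Code) (a s x : ℕ) : ℕ := Nat.pair (dd c a x s) x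

/-- list of elements discovered by stage `s`. -/
def Lst (c : Code) (a s : ℕ) : List ℕ := (List.range s).filter fun x => app c a x s

/-- rank of `x` at stage `s`. -/
def cnt (c : Code) (a s x : ℕ) : ℕ :=
  ((Lst c a s).filter fun y => decide (keyS c a s y < keyS c a s x)).length

def Fk (c : Code) (k a s : ℕ) : Option ℕ :=
  ((Lst c a s).filter fun x => decide (cnt c a s x = k)).head?

/-- the interpreter. -/
def interp (c : Code) : List Bool × ℕ →. ℕ :=
  fun q => Nat.rfindOpt fun s => Fk c (KVal q.1) q.2 s

/-! ### Computability -/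

theorem primrec_band {α} [Primcodable α] {f g : α → Bool} (hf : Primrec f) (hg : Primrec g) :
    Primrec fun a => f a && g a :=
  (Primrec.cond hf hg (Primrec.const false)).of_eq fun a => by cases h : f a <;> simp [h]

theorem primrec_bnot {α} [Primcodable α] {f : α → Bool} (hf : Primrec f) :
    Primrec fun a => !f a :=
  (Primrec.cond hf (Primrec.const false) (Primrec.const true)).of_eq fun a => by
    cases h : f a <;> simp [h]

theorem primrec_filter {α β} [Primcodable α] [Primcodable β] {f : α → List β}
    {p : α → β → Bool} (hf : Primrec f) (hp : Primrec₂ p) :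
    Primrec fun a => (f a).filter (p a) :=
  (Primrec.listFilterMap hf
      ((Primrec.cond hp (Primrec.option_some.comp Primrec.snd)
        (Primrec.const none)).to₂)).of_eq fun a => by
    induction f a with
    | nil => rfl
    | cons b l ih =>
      simp only [List.filterMap_cons, List.filter_cons]
      cases h : p a b <;> simp [h, ih]

variable {α : Type} [Primcodable α] (c : Code)

theorem app_pr {a x s : α → ℕ} (ha : Primrec a) (hx : Primrec x) (hs : Primrec s) :
    Primrec fun w => app c (a w) (x w) (s w) :=
  primrec_band (Primrec.nat_lt.comp hx hs).decide
    (Primrec.option_isSome.comp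
      (primrec_evaln.comp (((hs.pair (Primrec.const c)).pair (Primrec₂.natPair.comp ha hx)))))

theorem dd_pr {a x s : α → ℕ} (ha : Primrec a) (hx : Primrec x) (hs : Primrec s) :
    Primrec fun w => dd c (a w) (x w) (s w) :=
  Primrec.list_length.comp <|
    primrec_filter (Primrec.list_range.comp (Primrec.succ.comp hs))
      (Primrec₂.mk (primrec_bnot
        (app_pr c (ha.comp Primrec.fst) (hx.comp Primrec.fst) Primrec.snd)))

theorem keyS_pr {a s x : α → ℕ} (ha : Primrec a) (hs : Primrec s) (hx : Primrec x) :
    Primrec fun w => keyS c (a w) (s w) (x w) :=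
  Primrec₂.natPair.comp (dd_pr c ha hx hs) hx

theorem Lst_pr {a s : α → ℕ} (ha : Primrec a) (hs : Primrec s) :
    Primrec fun w => Lst c (a w) (s w) :=
  primrec_filter (Primrec.list_range.comp hs)
    (Primrec₂.mk (app_pr c (ha.comp Primrec.fst) Primrec.snd (hs.comp Primrec.fst)))

theorem cnt_pr {a s x : α → ℕ} (ha : Primrec a) (hs : Primrec s) (hx : Primrec x) :
    Primrec fun w => cnt c (a w) (s w) (x w) :=
  Primrec.list_length.comp <|
    primrec_filter (Lst_pr c ha hs)
      (Primrec₂.mk (Primrec.nat_lt.comp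
        (keyS_pr c (ha.comp Primrec.fst) (hs.comp Primrec.fst) Primrec.snd)
        (keyS_pr c (ha.comp Primrec.fst) (hs.comp Primrec.fst) (hx.comp Primrec.fst))).decide)

theorem Fk_pr {k a s : α → ℕ} (hk : Primrec k) (ha : Primrec a) (hs : Primrec s) :
    Primrec fun w => Fk c (k w) (a w) (s w) :=
  Primrec.list_head?.comp <|
    primrec_filter (Lst_pr c ha hs)
      (Primrec₂.mk (Primrec.eq.comp
        (cnt_pr c (ha.comp Primrec.fst) (hs.comp Primrec.fst) Primrec.snd)
        (hk.comp Primrec.fst)).decide)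

theorem KVal_pr : Primrec KVal := by
  have hb : Primrec (fun p : (List Bool) × (Bool × ℕ) => Nat.bit p.2.1 p.2.2) :=
    (Primrec.cond (Primrec.fst.comp Primrec.snd)
      (Primrec.succ.comp (Primrec.nat_add.comp (Primrec.snd.comp Primrec.snd)
        (Primrec.snd.comp Primrec.snd)))
      (Primrec.nat_add.comp (Primrec.snd.comp Primrec.snd)
        (Primrec.snd.comp Primrec.snd))).of_eq fun p => by
        rcases p with ⟨a, b, n⟩
        cases b <;> simp [Nat.bit] <;> omega
  exact (Primrec.list_foldr (Primrec.id) (Primrec.const 0) hb.to₂).of_eq fun l => rfl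

theorem interp_partrec : Partrec (interp c) :=
  Partrec.rfindOpt <| Computable₂.mk <|
    Primrec.to_comp <|
      Fk_pr c (KVal_pr.comp (Primrec.fst.comp Primrec.fst))
        (Primrec.snd.comp Primrec.fst) Primrec.snd

/-! ### Correctness -/

theorem evaln_isSome_mono {c : Code} {n s s' : ℕ} (h : (evaln s c n).isSome)
    (hss : s ≤ s') : (evaln s' c n).isSome := by
  obtain ⟨v, hv⟩ := Option.isSome_iff_exists.1 h
  exact Option.isSome_iff_exists.2 ⟨v, evaln_mono hss hv⟩

theorem app_mono {c : Code} {a x s s' : ℕ} (h : app c a x s = true) (hss : s ≤ s') :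
    app c a x s' = true := by
  simp only [app, Bool.and_eq_true, decide_eq_true_eq] at h ⊢
  exact ⟨lt_of_lt_of_le h.1 hss, evaln_isSome_mono h.2 hss⟩

/-- The set enumerated in section `a`. -/
def Sset (c : Code) (a : ℕ) : Set ℕ := {x | ∃ s, app c a x s = true}

/-- Discovery stage. -/
noncomputable def D (c : Code) (a x : ℕ) : ℕ := sInf {s | app c a x s = true}

variable {c} {a : ℕ}

theorem app_D {x : ℕ} (hx : x ∈ Sset c a) : app c a x (D c a x) = true :=
  Nat.sInf_mem hx

theorem app_iff_D {x : ℕ} (hx : x ∈ Sset c a) {s : ℕ} :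
    app c a x s = true ↔ D c a x ≤ s :=
  ⟨fun h => Nat.sInf_le h, fun h => app_mono (app_D hx) h⟩

theorem x_lt_D {x : ℕ} (hx : x ∈ Sset c a) : x < D c a x := by
  have := app_D hx
  simp only [app, Bool.and_eq_true, decide_eq_true_eq] at this
  exact this.1

theorem filter_range_lt (d : ℕ) : ∀ n, ((List.range n).filter fun t => decide (t < d)).length
    = min d n := by
  intro n
  induction n with
  | zero => simp
  | succ n ih =>
    rw [List.range_succ, List.filter_append, List.length_append, ih]
    by_cases h : n < d <;> simp [h] <;> omega

theorem dd_eq {x s : ℕ} (hx : x ∈ Sset c a) (hs : D c a x ≤ s) :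
    dd c a x s = D c a x := by
  unfold dd
  have : ((List.range (s + 1)).filter fun t => !app c a x t) =
      (List.range (s + 1)).filter fun t => decide (t < D c a x) := by
    apply List.filter_congr
    intro t _
    rcases Nat.lt_or_ge t (D c a x) with h | h
    · have h2 : app c a x t = false := by
        cases hA : app c a x t
        · rfl
        · exact absurd ((app_iff_D hx).1 hA) (by omega)
      rw [h2]
      simp [h]
    · rw [(app_iff_D hx).2 h]
      simp [Nat.not_lt.2 h]
  rw [this, filter_range_lt]
  omega

theorem mem_Lst {x s : ℕ} : x ∈ Lst c a s ↔ app c a x s = true := by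
  unfold Lst
  rw [List.mem_filter, List.mem_range]
  constructor
  · exact fun h => h.2
  · intro h
    refine ⟨?_, h⟩
    simp only [app, Bool.and_eq_true, decide_eq_true_eq] at h
    exact h.1

theorem mem_Lst_S {x s : ℕ} (h : x ∈ Lst c a s) : x ∈ Sset c a :=
  ⟨s, mem_Lst.1 h⟩

theorem Lst_nodup (s : ℕ) : (Lst c a s).Nodup :=
  List.filter_sublist.nodup (List.nodup_range (n := s))

/-- Global key: stable total order of discovery. -/
noncomputable def keyD (c : Code) (a x : ℕ) : ℕ := Nat.pair (D c a x) x

theorem keyS_eq_keyD {x s : ℕ} (hx : x ∈ Sset c a) (hs : D c a x ≤ s) :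
    keyS c a s x = keyD c a x := by
  unfold keyS keyD
  rw [dd_eq hx hs]

theorem pair_lt_pair {x dx y dy : ℕ} (h1 : x < dx) (h2 : y < dy) (h3 : dx < dy) :
    Nat.pair dx x < Nat.pair dy y := by
  unfold Nat.pair
  rw [if_neg (by omega), if_neg (by omega)]
  nlinarith

theorem keyD_lt {x y m : ℕ} (hx : x ∈ Sset c a) (hy : y ∈ Sset c a)
    (h1 : D c a x ≤ m) (h2 : m < D c a y) : keyD c a x < keyD c a y :=
  pair_lt_pair (x_lt_D hx) (x_lt_D hy) (by omega)

theorem keyD_inj {x y : ℕ} (h : keyD c a x = keyD c a y) : x = y :=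
  (Nat.pair_eq_pair.1 h).2

/-- the global-rank list at stage `s`. -/
noncomputable def FinL (c : Code) (a s x : ℕ) : List ℕ :=
  (Lst c a s).filter fun y => decide (keyD c a y < keyD c a x)

theorem cnt_eq_global {x s : ℕ} (hx : x ∈ Sset c a) (hs : D c a x ≤ s) :
    cnt c a s x = (FinL c a s x).length := by
  unfold cnt FinL
  congr 1
  apply List.filter_congr
  intro y hy
  have hyS := mem_Lst_S hy
  have hys : D c a y ≤ s := (app_iff_D hyS).1 (mem_Lst.1 hy)
  rw [keyS_eq_keyD hyS hys, keyS_eq_keyD hx hs]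

theorem FinL_nodup (s x : ℕ) : (FinL c a s x).Nodup :=
  List.filter_sublist.nodup (Lst_nodup s)

theorem mem_FinL {x s y : ℕ} : y ∈ FinL c a s x ↔ y ∈ Lst c a s ∧ keyD c a y < keyD c a x := by
  unfold FinL
  rw [List.mem_filter]
  simp

theorem FinL_stable {x m n : ℕ} (hx : x ∈ Sset c a) (hm : D c a x ≤ m) (hmn : m ≤ n) :
    (FinL c a m x).length = (FinL c a n x).length := by
  rw [← List.toFinset_card_of_nodup (FinL_nodup m x),
    ← List.toFinset_card_of_nodup (FinL_nodup n x)]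
  congr 1
  ext y
  simp only [List.mem_toFinset, mem_FinL, mem_Lst]
  constructor
  · rintro ⟨h1, h2⟩
    exact ⟨app_mono h1 hmn, h2⟩
  · rintro ⟨h1, h2⟩
    have hyS : y ∈ Sset c a := ⟨n, h1⟩
    have hDy : D c a y ≤ m := by
      by_contra hc'
      exact absurd h2 (not_lt.2 (le_of_lt (keyD_lt hx hyS hm (by omega))))
    exact ⟨(app_iff_D hyS).2 hDy, h2⟩

theorem cnt_lt_of_keyD_lt {z z' s : ℕ} (hz : z ∈ Lst c a s) (hz' : z' ∈ Lst c a s)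
    (h : keyD c a z < keyD c a z') : cnt c a s z < cnt c a s z' := by
  have hzS := mem_Lst_S hz
  have hz'S := mem_Lst_S hz'
  have hDz : D c a z ≤ s := (app_iff_D hzS).1 (mem_Lst.1 hz)
  have hDz' : D c a z' ≤ s := (app_iff_D hz'S).1 (mem_Lst.1 hz')
  rw [cnt_eq_global hzS hDz, cnt_eq_global hz'S hDz',
    ← List.toFinset_card_of_nodup (FinL_nodup s z),
    ← List.toFinset_card_of_nodup (FinL_nodup s z')]
  apply Finset.card_lt_card
  rw [Finset.ssubset_def]
  constructor
  · intro y hy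
    simp only [List.mem_toFinset, mem_FinL] at *
    exact ⟨hy.1, lt_trans hy.2 h⟩
  · intro hc'
    have := hc' (by simp only [List.mem_toFinset, mem_FinL]; exact ⟨hz, h⟩)
    simp only [List.mem_toFinset, mem_FinL] at this
    exact absurd this.2 (lt_irrefl _)

theorem cnt_inj {z z' s : ℕ} (hz : z ∈ Lst c a s) (hz' : z' ∈ Lst c a s)
    (h : cnt c a s z = cnt c a s z') : z = z' := by
  rcases lt_trichotomy (keyD c a z) (keyD c a z') with h' | h' | h'
  · exact absurd h (ne_of_lt (cnt_lt_of_keyD_lt hz hz' h'))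
  · exact keyD_inj h'
  · exact absurd h.symm (ne_of_lt (cnt_lt_of_keyD_lt hz' hz h'))

theorem Fk_eq_some {z s k : ℕ} (hz : z ∈ Lst c a s) (hcnt : cnt c a s z = k) :
    Fk c k a s = some z := by
  have hmem : z ∈ (Lst c a s).filter fun x => decide (cnt c a s x = k) :=
    List.mem_filter.2 ⟨hz, by simp [hcnt]⟩
  unfold Fk
  cases hl : (Lst c a s).filter fun x => decide (cnt c a s x = k) with
  | nil => rw [hl] at hmem; exact absurd hmem List.not_mem_nil
  | cons w tl =>
    have hwmem : w ∈ (Lst c a s).filter fun x => decide (cnt c a s x = k) := by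
      rw [hl]; exact List.mem_cons_self
    rw [List.mem_filter] at hwmem
    have hwz : w = z := cnt_inj hwmem.1 hz (by
      have := hwmem.2
      simp only [decide_eq_true_eq] at this
      omega)
    simp [hwz]

theorem Fk_mono {z m n k : ℕ} (h : Fk c k a m = some z) (hmn : m ≤ n) :
    Fk c k a n = some z := by
  have hzmem : z ∈ (Lst c a m).filter fun x => decide (cnt c a m x = k) := by
    have h' : z ∈ ((Lst c a m).filter fun x => decide (cnt c a m x = k)).head? := h
    rw [List.eq_cons_of_mem_head? h']
    exact List.mem_cons_self
  rw [List.mem_filter] at hzmem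
  have hzL := hzmem.1
  have hzc : cnt c a m z = k := by simpa using hzmem.2
  have hzS := mem_Lst_S hzL
  have hDz : D c a z ≤ m := (app_iff_D hzS).1 (mem_Lst.1 hzL)
  have hzLn : z ∈ Lst c a n := mem_Lst.2 (app_mono (mem_Lst.1 hzL) hmn)
  apply Fk_eq_some hzLn
  rw [cnt_eq_global hzS (le_trans hDz hmn), ← FinL_stable hzS hDz hmn,
    ← cnt_eq_global hzS hDz, hzc]

end KolmoAux

/-- For a recursively enumerable `E ⊆ ℕ × ℕ` there is a constant `c` such that
for every `a` with finite nonempty section `E^a = {x : (a,x) ∈ E}` and every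
`x ∈ E^a` we have `C_U(x|a) ≤ log₂(card E^a) + c`. -/
theorem complexity_bound_from_enumerable_section
    (U : List Bool × ℕ →. ℕ) (hU : IsOptimal U)
    (E : Set (ℕ × ℕ))
    (hE : ∃ f : ℕ × ℕ →. Unit, Partrec f ∧ ∀ p, (f p).Dom ↔ p ∈ E) :
    ∃ c : ℕ, ∀ a : ℕ,
      {x : ℕ | (a, x) ∈ E}.Finite → {x : ℕ | (a, x) ∈ E}.Nonempty →
      ∀ x : ℕ, (a, x) ∈ E →
        CC U x a ≤ ((Nat.log 2 ({x : ℕ | (a, x) ∈ E}.ncard) : ℕ) : ℕ∞) + (c : ℕ∞) := by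
  classical
  open KolmoAux Nat.Partrec.Code in
  obtain ⟨f, hf, hfE⟩ := hE
  -- turn `f` into a code
  set g : ℕ →. ℕ := fun n => (f (n.unpair.1, n.unpair.2)).map fun _ => 0 with hg
  have hgpart : Partrec g := by
    apply Partrec.map
    · exact hf.comp (Computable.pair (Computable.fst.comp Computable.unpair)
        (Computable.snd.comp Computable.unpair))
    · exact (Computable.const 0).to₂
  obtain ⟨cd, hcd⟩ := Nat.Partrec.Code.exists_code.1 (Partrec.nat_iff.1 hgpart)
  -- characterization of `E` via `Sset`
  have hSE : ∀ a, {x : ℕ | (a, x) ∈ E} = Sset cd a := by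
    intro a
    ext x
    have hdom : (a, x) ∈ E ↔ (eval cd (Nat.pair a x)).Dom := by
      rw [hcd]
      simp only [hg, Nat.unpair_pair, Part.map_Dom]
      exact (hfE (a, x)).symm
    simp only [Set.mem_setOf_eq, Sset, hdom]
    rw [Part.dom_iff_mem]
    constructor
    · rintro ⟨y, hy⟩
      obtain ⟨s, hs⟩ := Nat.Partrec.Code.evaln_complete.1 hy
      refine ⟨max s (x + 1), ?_⟩
      simp only [app, Bool.and_eq_true, decide_eq_true_eq]
      refine ⟨by omega, evaln_isSome_mono (Option.isSome_iff_exists.2 ⟨y, hs⟩) (le_max_left _ _)⟩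
    · rintro ⟨s, hs⟩
      simp only [app, Bool.and_eq_true, decide_eq_true_eq] at hs
      obtain ⟨y, hy⟩ := Option.isSome_iff_exists.1 hs.2
      exact ⟨y, Nat.Partrec.Code.evaln_sound hy⟩
  -- the interpreter and its optimality constant
  obtain ⟨c0, hc0⟩ := hU.2 (interp cd) (interp_partrec cd)
  refine ⟨c0 + 1, fun a hfin _hne x hx => ?_⟩
  rw [hSE] at hfin ⊢
  have hxS : x ∈ Sset cd a := by rw [← hSE]; exact hx
  set N := (Sset cd a).ncard with hN
  -- `x` shows up in the list at stage `D cd a x`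
  have hxL : x ∈ Lst cd a (D cd a x) := mem_Lst.2 (app_D hxS)
  set k := cnt cd a (D cd a x) x with hk
  have hFk : Fk cd k a (D cd a x) = some x := Fk_eq_some hxL rfl
  -- `k < N`
  have hkN : k < N := by
    have hDx : D cd a x ≤ D cd a x := le_refl _
    rw [hk, cnt_eq_global hxS hDx, ← List.toFinset_card_of_nodup (FinL_nodup _ _)]
    rw [hN, Set.ncard_eq_toFinset_card _ hfin]
    apply Finset.card_lt_card
    rw [Finset.ssubset_def]
    constructor
    · intro y hy
      simp only [List.mem_toFinset, mem_FinL] at hy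
      simp only [Set.Finite.mem_toFinset]
      exact mem_Lst_S hy.1
    · intro hc'
      have hxmem : x ∈ hfin.toFinset := by simp only [Set.Finite.mem_toFinset]; exact hxS
      have := hc' hxmem
      simp only [List.mem_toFinset, mem_FinL] at this
      exact absurd this.2 (lt_irrefl _)
  -- `x ∈ interp cd (Nat.bits k, a)`
  have hmem : x ∈ interp cd (Nat.bits k, a) := by
    unfold interp
    rw [Nat.rfindOpt_mono]
    · exact ⟨D cd a x, by simp only [KVal_bits]; rw [hFk]; rfl⟩
    · intro b m n hmn hb
      simp only [Option.mem_def, KVal_bits] at hb ⊢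
      exact Fk_mono hb hmn
  -- complexity bound for the interpreter
  have hCCA : CC (interp cd) x a ≤ ((Nat.bits k).length : ℕ∞) :=
    sInf_le ⟨Nat.bits k, hmem, rfl⟩
  have hlen : (Nat.bits k).length ≤ Nat.log 2 N + 1 := by
    rw [Nat.size_eq_bits_len] at *
    rw [Nat.size_le]
    calc k < N := hkN
    _ < 2 ^ (Nat.log 2 N + 1) := Nat.lt_pow_succ_log_self one_lt_two N
  calc CC U x a ≤ CC (interp cd) x a + (c0 : ℕ∞) := hc0 x a
  _ ≤ ((Nat.log 2 N + 1 : ℕ) : ℕ∞) + (c0 : ℕ∞) := by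
      apply add_le_add_left
      exact le_trans hCCA (by exact_mod_cast hlen)
  _ = ((Nat.log 2 N : ℕ) : ℕ∞) + ((c0 + 1 : ℕ) : ℕ∞) := by
      push_cast
      ring
end

section
/- Let U be an optimal interpreter. Then there is a constant c such that for all x ∈ ℕ: |C_U(⟨x, C_U(x)⟩) − C_U(x)| ≤ c, where ⟨·,·⟩ = Nat.pair and C_U(x) is finite for every x since U is optimal. -/
open scoped ENat

lemma CC_le {A : List Bool × ℕ →. ℕ} {x y : ℕ} {p : List Bool}
    (h : x ∈ A (p, y)) : CC A x y ≤ (p.length : ℕ∞) :=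
  sInf_le ⟨p, h, rfl⟩

lemma CC_attained {A : List Bool × ℕ →. ℕ} {x y : ℕ} (h : CC A x y ≠ ⊤) :
    ∃ p : List Bool, x ∈ A (p, y) ∧ (p.length : ℕ∞) = CC A x y := by
  have hne : {n : ℕ∞ | ∃ p : List Bool, x ∈ A (p, y) ∧ (p.length : ℕ∞) = n}.Nonempty := by
    by_contra hcon
    rw [Set.not_nonempty_iff_eq_empty] at hcon
    apply h
    simp [CC, hcon]
  exact csInf_mem hne

/-- `C_U(⟨x, C_U(x)⟩) = C_U(x)` to within an additive constant. -/
theorem complexity_of_pair_with_own_complexity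
    (U : List Bool × ℕ →. ℕ) (hU : IsOptimal U) :
    ∃ c : ℕ, ∀ x : ℕ,
      CC U (Nat.pair x (CC U x 0).toNat) 0 ≤ CC U x 0 + (c : ℕ∞) ∧
      CC U x 0 ≤ CC U (Nat.pair x (CC U x 0).toNat) 0 + (c : ℕ∞) := by
  classical
  -- interpreter A : outputs pair (U p y) (length p)
  set A : List Bool × ℕ →. ℕ := fun z => (U z).map (fun n => Nat.pair n z.1.length) with hAdef
  have hA : Partrec A := by
    apply hU.1.map
    exact (Primrec₂.natPair.comp (Primrec.snd)
      (Primrec.list_length.comp (Primrec.fst.comp Primrec.fst))).to_comp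
  -- interpreter B : outputs first component of unpair
  set B : List Bool × ℕ →. ℕ := fun z => (U z).map (fun n => n.unpair.1) with hBdef
  have hB : Partrec B := by
    apply hU.1.map
    exact ((Primrec.fst.comp Primrec.unpair).comp Primrec.snd).to_comp
  -- interpreter D : decodes the program itself
  set D : List Bool × ℕ →. ℕ := fun z => Part.some z.1.length with hDdef
  have hD : Partrec D := (Primrec.list_length.comp Primrec.fst).to_comp
  obtain ⟨c₁, hc₁⟩ := hU.2 A hA
  obtain ⟨c₂, hc₂⟩ := hU.2 B hB
  obtain ⟨c₃, hc₃⟩ := hU.2 D hD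
  -- finiteness
  have hfin : ∀ x : ℕ, CC U x 0 ≠ ⊤ := by
    intro x
    have hx : x ∈ D (List.replicate x true, 0) := by
      simp [hDdef]
    have h1 : CC U x 0 ≤ ((x + c₃ : ℕ) : ℕ∞) := by
      push_cast
      exact le_trans (hc₃ x 0) (add_le_add_left (by simpa using CC_le hx) _)
    exact ne_top_of_le_ne_top (ENat.coe_ne_top (x + c₃)) h1
  refine ⟨max c₁ c₂, fun x => ?_⟩
  set m : ℕ := (CC U x 0).toNat with hmdef
  have hm : (m : ℕ∞) = CC U x 0 := ENat.coe_toNat (hfin x)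
  constructor
  · -- first direction via A
    obtain ⟨p, hp, hlen⟩ := CC_attained (hfin x)
    have hmem : Nat.pair x m ∈ A (p, 0) := by
      have hpm : p.length = m := by exact_mod_cast hlen.trans hm.symm
      simp only [hAdef]
      rw [← hpm]
      exact Part.mem_map _ hp
    have h1 : CC A (Nat.pair x m) 0 ≤ CC U x 0 := by
      calc CC A (Nat.pair x m) 0 ≤ (p.length : ℕ∞) := CC_le hmem
        _ = CC U x 0 := hlen
    calc CC U (Nat.pair x m) 0 ≤ CC A (Nat.pair x m) 0 + (c₁ : ℕ∞) := hc₁ _ 0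
      _ ≤ CC U x 0 + (max c₁ c₂ : ℕ∞) :=
        add_le_add h1 (Nat.cast_le.mpr (le_max_left c₁ c₂))
  · -- second direction via B
    obtain ⟨q, hq, hqlen⟩ := CC_attained (hfin (Nat.pair x m))
    have hmem : x ∈ B (q, 0) := by
      simp only [hBdef]
      have := Part.mem_map (fun n => n.unpair.1) hq
      simpa using this
    have h1 : CC B x 0 ≤ CC U (Nat.pair x m) 0 := by
      calc CC B x 0 ≤ (q.length : ℕ∞) := CC_le hmem
        _ = CC U (Nat.pair x m) 0 := hqlen
    calc CC U x 0 ≤ CC B x 0 + (c₂ : ℕ∞) := hc₂ x 0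
      _ ≤ CC U (Nat.pair x m) 0 + (max c₁ c₂ : ℕ∞) :=
        add_le_add h1 (Nat.cast_le.mpr (le_max_right c₁ c₂))
end

section
/- (Shannon's coding lower bound.) Let α be a countable type, P : α → ℝ a probability mass function (P ≥ 0, ∑_x P(x) = 1), and z : α → List Bool a prefix code: for x ≠ y, z(x) is not a prefix of z(y). Then the expected codeword length satisfies ∑_x P(x)·|z(x)| ≥ −∑_x P(x)·log₂ P(x), where both sides are interpreted in [0, ∞] and terms with P(x) = 0 contribute 0 to the right-hand side. -/
open scoped ENNReal

private lemma card_prefix_filter (u : List Bool) (n : ℕ) (hu : u.length ≤ n) :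
    ((Finset.univ : Finset (List.Vector Bool n)).filter (fun w => u <+: w.1)).card
      = 2 ^ (n - u.length) := by
  classical
  have : 2 ^ (n - u.length) = Fintype.card (List.Vector Bool (n - u.length)) := by
    rw [card_vector]; simp
  rw [this, ← Finset.card_univ]
  refine Finset.card_bij' (fun w _ => ⟨w.1.drop u.length, by simp [w.2]⟩)
    (fun v _ => ⟨u ++ v.1, by simp [v.2]; omega⟩) (fun w hw => Finset.mem_univ _)
    (fun v _ => ?_) (fun w hw => ?_) (fun v _ => ?_)
  · exact Finset.mem_filter.2 ⟨Finset.mem_univ _, v.1, rfl⟩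
  · simp only [Finset.mem_filter, Finset.mem_univ, true_and] at hw
    exact Subtype.ext (by simpa using List.prefix_iff_eq_append.1 hw)
  · exact Subtype.ext (by simp)

private lemma kraft_finset {α : Type*} (z : α → List Bool)
    (hz : ∀ x y, x ≠ y → ¬ (z x <+: z y)) (S : Finset α) :
    ∑ x ∈ S, ((2:ℝ)⁻¹) ^ (z x).length ≤ 1 := by
  classical
  set n := S.sup fun x => (z x).length with hn
  have hle : ∀ x ∈ S, (z x).length ≤ n := fun x hx => Finset.le_sup (f := fun x => (z x).length) hx
  set E : α → Finset (List.Vector Bool n) :=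
    fun x => Finset.univ.filter (fun w => z x <+: w.1) with hE
  have hdisj : ∀ x ∈ S, ∀ y ∈ S, x ≠ y → Disjoint (E x) (E y) := by
    intro x _ y _ hxy
    refine Finset.disjoint_left.2 fun w hwx hwy => ?_
    simp only [hE, Finset.mem_filter, Finset.mem_univ, true_and] at hwx hwy
    rcases List.prefix_or_prefix_of_prefix hwx hwy with h | h
    · exact hz x y hxy h
    · exact hz y x hxy.symm h
  have hcard : ∑ x ∈ S, 2 ^ (n - (z x).length) ≤ 2 ^ n := by
    calc ∑ x ∈ S, 2 ^ (n - (z x).length) = ∑ x ∈ S, (E x).card := by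
          refine Finset.sum_congr rfl fun x hx => ?_
          exact (card_prefix_filter (z x) n (hle x hx)).symm
      _ = (S.biUnion E).card := (Finset.card_biUnion hdisj).symm
      _ ≤ (Finset.univ : Finset (List.Vector Bool n)).card :=
          Finset.card_le_card (Finset.subset_univ _)
      _ = 2 ^ n := by rw [Finset.card_univ, card_vector]; simp
  have h2 : (0:ℝ) < 2 ^ n := by positivity
  have key : ∑ x ∈ S, ((2:ℝ)⁻¹) ^ (z x).length
      = (∑ x ∈ S, 2 ^ (n - (z x).length) : ℕ) / 2 ^ n := by
    push_cast
    rw [Finset.sum_div]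
    refine Finset.sum_congr rfl fun x hx => ?_
    rw [inv_pow, eq_div_iff (by positivity), inv_mul_eq_div, div_eq_iff (by positivity),
      ← pow_add]
    congr 1
    have := hle x hx
    omega
  rw [key, div_le_one h2]
  exact_mod_cast hcard

private lemma gibbs_term (p : ℝ) (hp : 0 ≤ p) (l : ℕ) :
    -(p * Real.logb 2 p) ≤ p * l + (((2:ℝ)⁻¹) ^ l - p) / Real.log 2 := by
  have hlog2 : (0:ℝ) < Real.log 2 := Real.log_pos one_lt_two
  rcases eq_or_lt_of_le hp with h | h
  · rw [← h]
    simp only [neg_zero, zero_mul, mul_zero, sub_zero, zero_add]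
    positivity
  · have hq : (0:ℝ) < (2:ℝ)⁻¹ ^ l := by positivity
    have key : Real.log (((2:ℝ)⁻¹) ^ l / p) ≤ ((2:ℝ)⁻¹) ^ l / p - 1 :=
      Real.log_le_sub_one_of_pos (by positivity)
    have e1 : Real.logb 2 (((2:ℝ)⁻¹) ^ l / p) = -l - Real.logb 2 p := by
      rw [Real.logb_div (ne_of_gt hq) (ne_of_gt h), Real.logb_pow, Real.logb_inv,
        Real.logb_self_eq_one one_lt_two]
      ring
    have e2 : p * Real.log (((2:ℝ)⁻¹) ^ l / p) ≤ ((2:ℝ)⁻¹) ^ l - p := by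
      have := mul_le_mul_of_nonneg_left key hp
      have hpeq : p * (((2:ℝ)⁻¹) ^ l / p - 1) = ((2:ℝ)⁻¹) ^ l - p := by
        field_simp
      linarith
    have e3 : p * Real.logb 2 (((2:ℝ)⁻¹) ^ l / p) ≤ (((2:ℝ)⁻¹) ^ l - p) / Real.log 2 := by
      rw [Real.logb, mul_div_assoc']
      exact div_le_div_of_nonneg_right e2 hlog2.le
    rw [e1] at e3
    nlinarith [e3]

private lemma gibbs_finset {α : Type*} (P : α → ℝ) (hP0 : ∀ x, 0 ≤ P x)
    (z : α → List Bool) (hz : ∀ x y, x ≠ y → ¬ (z x <+: z y)) (S : Finset α) :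
    ∑ x ∈ S, -(P x * Real.logb 2 (P x))
      ≤ (∑ x ∈ S, P x * (z x).length) + (1 - ∑ x ∈ S, P x) / Real.log 2 := by
  have hlog2 : (0:ℝ) < Real.log 2 := Real.log_pos one_lt_two
  have h1 : ∑ x ∈ S, -(P x * Real.logb 2 (P x))
      ≤ ∑ x ∈ S, (P x * (z x).length + (((2:ℝ)⁻¹) ^ (z x).length - P x) / Real.log 2) :=
    Finset.sum_le_sum fun x _ => gibbs_term (P x) (hP0 x) (z x).length
  have h2 : ∑ x ∈ S, ((2:ℝ)⁻¹) ^ (z x).length ≤ 1 := kraft_finset z hz S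
  have h3 : (∑ x ∈ S, ((2:ℝ)⁻¹) ^ (z x).length - ∑ x ∈ S, P x) / Real.log 2
      ≤ (1 - ∑ x ∈ S, P x) / Real.log 2 := by
    apply div_le_div_of_nonneg_right _ hlog2.le
    linarith
  calc ∑ x ∈ S, -(P x * Real.logb 2 (P x))
      ≤ ∑ x ∈ S, (P x * (z x).length + (((2:ℝ)⁻¹) ^ (z x).length - P x) / Real.log 2) := h1
    _ = (∑ x ∈ S, P x * (z x).length)
        + (∑ x ∈ S, ((2:ℝ)⁻¹) ^ (z x).length - ∑ x ∈ S, P x) / Real.log 2 := by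
        rw [Finset.sum_add_distrib, ← Finset.sum_div, Finset.sum_sub_distrib]
    _ ≤ _ := by linarith

/-- Shannon's coding lower bound: the expected codeword length of a prefix
code is at least the entropy `−∑_x P(x)·log₂ P(x)` (both sides in `[0,∞]`;
terms with `P(x) = 0` contribute `0` to the entropy). -/
theorem shannon_coding_lower_bound
    {α : Type*} [Countable α] (P : α → ℝ) (hP0 : ∀ x, 0 ≤ P x)
    (hP1 : HasSum P 1) (z : α → List Bool)
    (hz : ∀ x y, x ≠ y → ¬ (z x <+: z y)) :
    (∑' x, ENNReal.ofReal (-(P x * Real.logb 2 (P x)))) ≤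
      ∑' x, ENNReal.ofReal (P x) * ((z x).length : ℝ≥0∞) := by
  classical
  have hlog2 : (0:ℝ) < Real.log 2 := Real.log_pos one_lt_two
  have hPle : ∀ x, P x ≤ 1 := fun x => le_hasSum hP1 x fun y _ => hP0 y
  have hent : ∀ x, 0 ≤ -(P x * Real.logb 2 (P x)) := by
    intro x
    have : Real.logb 2 (P x) ≤ 0 := Real.logb_nonpos one_lt_two (hP0 x) (hPle x)
    nlinarith [hP0 x]
  rw [ENNReal.tsum_eq_iSup_sum]
  refine iSup_le fun S => ?_
  refine ENNReal.le_of_forall_pos_le_add fun ε hε _ => ?_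
  have hεR : (0:ℝ) < ε := hε
  have hev : ∀ᶠ T in (Filter.atTop : Filter (Finset α)),
      1 - (ε : ℝ) * Real.log 2 < ∑ x ∈ T, P x :=
    hP1.eventually (eventually_gt_nhds (by nlinarith))
  obtain ⟨S₀, hS₀⟩ := Filter.eventually_atTop.1 hev
  set T := S ∪ S₀ with hT
  have hTsum : 1 - (ε : ℝ) * Real.log 2 < ∑ x ∈ T, P x :=
    hS₀ T (Finset.subset_union_right)
  have step1 : ∑ x ∈ S, ENNReal.ofReal (-(P x * Real.logb 2 (P x)))
      ≤ ∑ x ∈ T, ENNReal.ofReal (-(P x * Real.logb 2 (P x))) :=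
    Finset.sum_le_sum_of_subset Finset.subset_union_left
  have step2 : ∑ x ∈ T, ENNReal.ofReal (-(P x * Real.logb 2 (P x)))
      = ENNReal.ofReal (∑ x ∈ T, -(P x * Real.logb 2 (P x))) :=
    (ENNReal.ofReal_sum_of_nonneg fun x _ => hent x).symm
  have step3 : (∑ x ∈ T, -(P x * Real.logb 2 (P x)))
      ≤ (∑ x ∈ T, P x * (z x).length) + (ε : ℝ) := by
    have := gibbs_finset P hP0 z hz T
    have h4 : (1 - ∑ x ∈ T, P x) / Real.log 2 ≤ (ε : ℝ) := by
      rw [div_le_iff₀ hlog2]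
      linarith
    linarith
  have step4 : ENNReal.ofReal ((∑ x ∈ T, P x * (z x).length) + (ε : ℝ))
      ≤ (∑ x ∈ T, ENNReal.ofReal (P x) * ((z x).length : ℝ≥0∞)) + (ε : ℝ≥0∞) := by
    refine le_trans ENNReal.ofReal_add_le (add_le_add ?_ ?_)
    · rw [ENNReal.ofReal_sum_of_nonneg fun x _ => mul_nonneg (hP0 x) (Nat.cast_nonneg _)]
      refine Finset.sum_le_sum fun x _ => ?_
      rw [ENNReal.ofReal_mul (hP0 x)]
      simp
    · simp [ENNReal.ofReal_coe_nnreal]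
  calc ∑ x ∈ S, ENNReal.ofReal (-(P x * Real.logb 2 (P x)))
      ≤ ∑ x ∈ T, ENNReal.ofReal (-(P x * Real.logb 2 (P x))) := step1
    _ = ENNReal.ofReal (∑ x ∈ T, -(P x * Real.logb 2 (P x))) := step2
    _ ≤ ENNReal.ofReal ((∑ x ∈ T, P x * (z x).length) + (ε : ℝ)) :=
        ENNReal.ofReal_le_ofReal step3
    _ ≤ (∑ x ∈ T, ENNReal.ofReal (P x) * ((z x).length : ℝ≥0∞)) + (ε : ℝ≥0∞) := step4
    _ ≤ (∑' x, ENNReal.ofReal (P x) * ((z x).length : ℝ≥0∞)) + (ε : ℝ≥0∞) :=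
        add_le_add_left (ENNReal.sum_le_tsum T) _
end
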